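/- arXiv:1109.6560 — 4 statements merged into one kernel-verified Lean document; each statement's English description precedes it below -/
import Mathlib

section
/- For |q|<1 and nonzero w, ∑_{n≥0} (−1)^n w^{-3n} q^{n(3n+1)/2} (1 − w^{-2} q^{2n+1}) = ∑_{n≥0} (12/n) w^{(−n+1)/2} q^{(n²−1)/24}, where (12/n) is the Kronecker symbol. -/
/-- The Kronecker symbol `(12/n)`. -/
def kron12 (n : ℕ) : ℤ :=
  if n % 12 = 1 ∨ n % 12 = 11 then 1 else if n % 12 = 5 ∨ n % 12 = 7 then -1 else 0

namespace PartialThetaAux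

open Filter Function

/-- The pentagonal exponent. -/
def E (m : ℕ) : ℕ := m * (3 * m + 1) / 2

lemma two_mul_E (m : ℕ) : 2 * E m = m * (3 * m + 1) := by
  apply Nat.mul_div_cancel'
  rcases Nat.even_or_odd m with ⟨t, ht⟩ | ⟨t, ht⟩
  · exact Dvd.dvd.mul_right ⟨t, by omega⟩ _
  · exact Dvd.dvd.mul_left ⟨3 * t + 2, by omega⟩ _

lemma E_succ (m : ℕ) : E (m + 1) = E m + (3 * m + 2) := by
  have c : 2 * E (m + 1) = 2 * E m + (6 * m + 4) := by
    rw [two_mul_E, two_mul_E]; ring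
  omega

lemma E_pos {m : ℕ} (hm : m ≠ 0) : 1 ≤ E m := by
  have a := two_mul_E m
  have h2 : 2 ≤ m * (3 * m + 1) := by nlinarith [Nat.one_le_iff_ne_zero.mpr hm]
  omega

lemma exp1 (m : ℕ) : ((6 * m + 1) ^ 2 - 1) / 24 = E m := by
  have d : (6 * m + 1) ^ 2 = 12 * (m * (3 * m + 1)) + 1 := by ring
  rw [← two_mul_E] at d
  rw [d]
  omega

lemma exp5 (m : ℕ) : ((6 * m + 5) ^ 2 - 1) / 24 = E m + (2 * m + 1) := by
  have d : (6 * m + 5) ^ 2 = 12 * (m * (3 * m + 1)) + (48 * m + 25) := by ring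
  rw [← two_mul_E] at d
  rw [d]
  omega

lemma kron12_6m1 (m : ℕ) : kron12 (6 * m + 1) = (-1) ^ m := by
  rcases Nat.even_or_odd m with ⟨t, ht⟩ | ⟨t, ht⟩
  · have h1 : (6 * m + 1) % 12 = 1 := by omega
    have h2 : (-1 : ℤ) ^ m = 1 := Even.neg_one_pow ⟨t, ht⟩
    simp [kron12, h1, h2]
  · have h1 : (6 * m + 1) % 12 = 7 := by omega
    have h2 : (-1 : ℤ) ^ m = -1 := Odd.neg_one_pow ⟨t, by omega⟩
    simp [kron12, h1, h2]

lemma kron12_6m5 (m : ℕ) : kron12 (6 * m + 5) = -(-1) ^ m := by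
  rcases Nat.even_or_odd m with ⟨t, ht⟩ | ⟨t, ht⟩
  · have h1 : (6 * m + 5) % 12 = 5 := by omega
    have h2 : (-1 : ℤ) ^ m = 1 := Even.neg_one_pow ⟨t, ht⟩
    simp [kron12, h1, h2]
  · have h1 : (6 * m + 5) % 12 = 11 := by omega
    have h2 : (-1 : ℤ) ^ m = -1 := Odd.neg_one_pow ⟨t, by omega⟩
    simp [kron12, h1, h2]

lemma kron12_eq_zero {n : ℕ} (h1 : n % 6 ≠ 1) (h5 : n % 6 ≠ 5) : kron12 n = 0 := by
  unfold kron12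
  split_ifs <;> omega

lemma aux_summable {u r : ℝ} (hu : 0 < u) (hr0 : 0 ≤ r) (hr : r < 1) :
    Summable (fun m : ℕ => u ^ m * r ^ E m) := by
  rcases eq_or_lt_of_le hr0 with h0 | h0
  · apply summable_of_ne_finset_zero (s := ({0} : Finset ℕ))
    intro m hm
    simp only [Finset.mem_singleton] at hm
    rw [← h0, zero_pow (by have := E_pos hm; omega), mul_zero]
  · apply summable_of_ratio_test_tendsto_lt_one (l := 0) zero_lt_one
      (Eventually.of_forall fun m => by positivity)
    have heq : ∀ m : ℕ, (u * r ^ 2) * (r ^ 3) ^ m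
        = ‖u ^ (m + 1) * r ^ E (m + 1)‖ / ‖u ^ m * r ^ E m‖ := by
      intro m
      rw [E_succ, pow_add, pow_succ,
        Real.norm_of_nonneg (by positivity), Real.norm_of_nonneg (by positivity)]
      have h1 : u ^ m ≠ 0 := by positivity
      have h2 : r ^ E m ≠ 0 := by positivity
      field_simp
      ring
    apply Tendsto.congr heq
    have h3 : r ^ 3 < 1 := pow_lt_one₀ hr0 hr (by norm_num)
    have := (tendsto_pow_atTop_nhds_zero_of_lt_one (by positivity) h3).const_mul (u * r ^ 2)
    simpa using this

end PartialThetaAux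

open PartialThetaAux Function in
theorem partial_theta_kronecker (w q : ℂ) (hq : ‖q‖ < 1) (hw : w ≠ 0) :
    ∑' n : ℕ, (-1) ^ n * w ^ (-(3 * (n : ℤ))) * q ^ (n * (3 * n + 1) / 2)
        * (1 - w ^ (-2 : ℤ) * q ^ (2 * n + 1))
      = ∑' n : ℕ, (kron12 n : ℂ) * w ^ ((1 - (n : ℤ)) / 2) * q ^ ((n ^ 2 - 1) / 24) := by
  have hw' : ‖w‖ ≠ 0 := norm_ne_zero_iff.mpr hw
  have hwp : (0 : ℝ) < ‖w‖ := norm_pos_iff.mpr hw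
  set u : ℝ := (‖w‖ ^ 3)⁻¹ with hu_def
  set r : ℝ := ‖q‖ with hr_def
  have hu : 0 < u := by positivity
  have hr0 : 0 ≤ r := norm_nonneg q
  set A : ℕ → ℂ := fun m => (-1) ^ m * w ^ (-(3 * (m : ℤ))) * q ^ E m with hA_def
  set B : ℕ → ℂ := fun m =>
    -((-1) ^ m * w ^ (-(3 * (m : ℤ)) + (-2)) * q ^ (E m + (2 * m + 1))) with hB_def
  set g : ℕ → ℂ := fun n =>
    (kron12 n : ℂ) * w ^ ((1 - (n : ℤ)) / 2) * q ^ ((n ^ 2 - 1) / 24) with hg_def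
  set gA : ℕ → ℂ := fun n => if n % 6 = 1 then g n else 0 with hgA_def
  set gB : ℕ → ℂ := fun n => if n % 6 = 5 then g n else 0 with hgB_def
  -- norm of A
  have normwA : ∀ m : ℕ, ‖w ^ (-(3 * (m : ℤ)))‖ = u ^ m := by
    intro m
    rw [norm_zpow, show -(3 * (m : ℤ)) = -((3 * m : ℕ) : ℤ) by push_cast; ring,
      zpow_neg, zpow_natCast, pow_mul, ← inv_pow]
  have normA : ∀ m : ℕ, ‖A m‖ = u ^ m * r ^ E m := by
    intro m
    rw [hA_def]
    simp only [norm_mul, norm_pow, norm_neg, norm_one, one_pow, one_mul, normwA, hr_def]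
  have SA : Summable A :=
    Summable.of_norm (by simpa only [funext normA] using aux_summable hu hr0 hq)
  -- norm of B
  have normB : ∀ m : ℕ, ‖B m‖ ≤ (‖w‖ ^ 2)⁻¹ * (u ^ m * r ^ E m) := by
    intro m
    rw [hB_def]
    simp only [norm_neg, norm_mul, norm_pow, norm_one, one_pow, one_mul, norm_zpow]
    rw [zpow_add₀ hw', pow_add]
    have e1 : ‖w ^ (-(3 * (m : ℤ)))‖ = u ^ m := normwA m
    rw [norm_zpow] at e1
    rw [e1]
    have e2 : ‖w‖ ^ (-2 : ℤ) = (‖w‖ ^ 2)⁻¹ := by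
      rw [zpow_neg]; norm_num
    rw [e2]
    have h3 : ‖q‖ ^ (2 * m + 1) ≤ 1 := pow_le_one₀ hr0 hq.le
    calc u ^ m * (‖w‖ ^ 2)⁻¹ * (‖q‖ ^ E m * ‖q‖ ^ (2 * m + 1))
        ≤ u ^ m * (‖w‖ ^ 2)⁻¹ * (‖q‖ ^ E m * 1) := by
          apply mul_le_mul_of_nonneg_left (by
            apply mul_le_mul_of_nonneg_left h3 (by positivity)) (by positivity)
      _ = (‖w‖ ^ 2)⁻¹ * (u ^ m * r ^ E m) := by rw [hr_def]; ring
  have SB : Summable B :=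
    Summable.of_norm_bounded ((aux_summable hu hr0 hq).mul_left ((‖w‖ ^ 2)⁻¹)) normB
  -- pointwise identities
  have hLHS : ∀ m : ℕ, (-1) ^ m * w ^ (-(3 * (m : ℤ))) * q ^ (m * (3 * m + 1) / 2)
      * (1 - w ^ (-2 : ℤ) * q ^ (2 * m + 1)) = A m + B m := by
    intro m
    rw [hA_def, hB_def]
    simp only [E]
    rw [zpow_add₀ hw, pow_add]
    ring
  have hA : ∀ m : ℕ, gA (6 * m + 1) = A m := by
    intro m
    have h6 : (6 * m + 1) % 6 = 1 := by omega
    rw [hgA_def]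
    simp only [h6, if_pos]
    rw [hg_def, hA_def]
    simp only
    rw [kron12_6m1, exp1,
      show (1 - ((6 * m + 1 : ℕ) : ℤ)) / 2 = -(3 * (m : ℤ)) by push_cast; omega]
    push_cast
    ring
  have hB : ∀ m : ℕ, gB (6 * m + 5) = B m := by
    intro m
    have h6 : (6 * m + 5) % 6 = 5 := by omega
    rw [hgB_def]
    simp only [h6, if_pos]
    rw [hg_def, hB_def]
    simp only
    rw [kron12_6m5, exp5,
      show (1 - ((6 * m + 5 : ℕ) : ℤ)) / 2 = -(3 * (m : ℤ)) + (-2) by push_cast; omega]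
    push_cast
    ring
  -- injections
  have iA : Injective (fun m : ℕ => 6 * m + 1) := by intro a b h; simp only [] at h; omega
  have iB : Injective (fun m : ℕ => 6 * m + 5) := by intro a b h; simp only [] at h; omega
  have suppA : ∀ n ∉ Set.range (fun m : ℕ => 6 * m + 1), gA n = 0 := by
    intro n hn
    rw [hgA_def]
    simp only
    rw [if_neg]
    intro h
    exact hn ⟨n / 6, by show 6 * (n / 6) + _ = n; omega⟩
  have suppB : ∀ n ∉ Set.range (fun m : ℕ => 6 * m + 5), gB n = 0 := by
    intro n hn
    rw [hgB_def]
    simp only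
    rw [if_neg]
    intro h
    exact hn ⟨n / 6, by show 6 * (n / 6) + _ = n; omega⟩
  have tA : ∑' m : ℕ, A m = ∑' n : ℕ, gA n := by
    rw [← iA.tsum_eq (f := gA) (Function.support_subset_iff'.mpr suppA)]
    exact tsum_congr fun m => (hA m).symm
  have tB : ∑' m : ℕ, B m = ∑' n : ℕ, gB n := by
    rw [← iB.tsum_eq (f := gB) (Function.support_subset_iff'.mpr suppB)]
    exact tsum_congr fun m => (hB m).symm
  have SgA : Summable gA :=
    (iA.summable_iff suppA).mp (SA.congr fun m => (hA m).symm)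
  have SgB : Summable gB :=
    (iB.summable_iff suppB).mp (SB.congr fun m => (hB m).symm)
  have split : ∀ n : ℕ, gA n + gB n = g n := by
    intro n
    rw [hgA_def, hgB_def]
    simp only
    by_cases h1 : n % 6 = 1
    · rw [if_pos h1, if_neg (by omega), add_zero]
    · by_cases h5 : n % 6 = 5
      · rw [if_neg (by omega), if_pos h5, zero_add]
      · rw [if_neg h1, if_neg h5, add_zero, hg_def]
        simp only
        rw [kron12_eq_zero h1 h5]
        simp
  calc ∑' n : ℕ, (-1) ^ n * w ^ (-(3 * (n : ℤ))) * q ^ (n * (3 * n + 1) / 2)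
        * (1 - w ^ (-2 : ℤ) * q ^ (2 * n + 1))
      = ∑' m : ℕ, (A m + B m) := tsum_congr hLHS
    _ = (∑' m : ℕ, A m) + ∑' m : ℕ, B m := Summable.tsum_add SA SB
    _ = (∑' n : ℕ, gA n) + ∑' n : ℕ, gB n := by rw [tA, tB]
    _ = ∑' n : ℕ, (gA n + gB n) := (Summable.tsum_add SgA SgB).symm
    _ = ∑' n : ℕ, g n := tsum_congr split
end

section
/- For |q|<1 and w ∉ {0} ∪ {q^ℓ : ℓ ∈ ℤ}, the universal mock theta function g₃(w;q) := ∑_{n≥0} q^{n(n+1)}/((w;q)_{n+1} (w^{-1}q;q)_{n+1}) equals −1/w + R(w;q)/(w(1−w)), where R(w;q) := 1 + ∑_{n≥1} q^{n²}/((wq;q)_n (w^{-1}q;q)_n) is the rank generating function. -/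
noncomputable def qPoch (a q : ℂ) (n : ℕ) : ℂ :=
  ∏ j ∈ Finset.range n, (1 - a * q ^ j)

open Filter Topology

lemma qPoch_succ (a q : ℂ) (n : ℕ) :
    qPoch a q (n + 1) = qPoch a q n * (1 - a * q ^ n) :=
  Finset.prod_range_succ _ _

lemma qPoch_succ' (a q : ℂ) (n : ℕ) :
    qPoch a q (n + 1) = (1 - a) * qPoch (a * q) q n := by
  unfold qPoch
  rw [Finset.prod_range_succ', pow_zero, mul_one, mul_comm]
  congr 1
  refine Finset.prod_congr rfl fun j _ => ?_
  rw [pow_succ']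
  ring

lemma summable_of_ratio_tendsto_zero {f g : ℕ → ℂ}
    (hfg : ∀ n, f (n + 1) = f n * g n)
    (hg : Tendsto g atTop (nhds 0)) : Summable f := by
  refine summable_of_ratio_norm_eventually_le (r := 1/2) (by norm_num) ?_
  have hgn : Tendsto (fun n => ‖g n‖) atTop (nhds 0) := by
    simpa using hg.norm
  have h2 : ∀ᶠ n in atTop, ‖g n‖ ≤ 1/2 :=
    hgn.eventually_le_const (by norm_num : (0:ℝ) < 1/2)
  filter_upwards [h2] with n hn
  rw [hfg n, norm_mul, mul_comm]
  exact mul_le_mul_of_nonneg_right hn (norm_nonneg _)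

lemma key_alg (w x t P Q v : ℂ) (hw : w ≠ 0) (h1 : 1 - w ≠ 0) (hP : P ≠ 0) (hQ : Q ≠ 0)
    (hu : 1 - w * x ≠ 0) (hv : v ≠ 0) (hrel : w * v = w - x) :
    t / ((1 - w) * P * (Q * v))
      = (1 / (1 - w)) * ((1 / w) * (t * x / (P * (1 - w * x) * (Q * v)))
        + (t / (P * Q) - t * x ^ 2 / (P * (1 - w * x) * (Q * v)))) := by
  have hx : x = w - w * v := by linear_combination hrel
  have hY : (1 - w) * (w * (P * (1 - w * x) * (Q * v)) * (P * Q * (P * (1 - w * x) * (Q * v)))) ≠ 0 := by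
    apply_rules [mul_ne_zero]
  field_simp
  rw [hx]
  ring

set_option maxHeartbeats 1000000 in
theorem g3_eq_g32 (w q : ℂ) (hq : ‖q‖ < 1) (hw : w ≠ 0)
    (hw' : ∀ ℓ : ℤ, w ≠ q ^ ℓ) :
    ∑' n : ℕ, q ^ (n * (n + 1)) / (qPoch w q (n + 1) * qPoch (w⁻¹ * q) q (n + 1))
      = -(1 / w) + 1 / (w * (1 - w))
          * (1 + ∑' n : ℕ, q ^ ((n + 1) ^ 2) / (qPoch (w * q) q (n + 1) * qPoch (w⁻¹ * q) q (n + 1))) := by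
  -- nonvanishing facts
  have hu : ∀ k : ℕ, (1 : ℂ) - w * q ^ k ≠ 0 := by
    intro k h
    rw [sub_eq_zero] at h
    have hqk : q ^ k ≠ 0 := by
      intro h0; rw [h0, mul_zero] at h; exact one_ne_zero h
    have : w = (q ^ k)⁻¹ := eq_inv_of_mul_eq_one_left (by rw [← h])
    exact hw' (-(k : ℤ)) (by rw [this, zpow_neg, zpow_natCast])
  have hv : ∀ k : ℕ, (1 : ℂ) - w⁻¹ * q ^ (k + 1) ≠ 0 := by
    intro k h
    rw [sub_eq_zero] at h
    have hwq : w = q ^ (k + 1) := (inv_mul_eq_one₀ hw).mp h.symm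
    exact hw' ((k + 1 : ℕ) : ℤ) (by rw [zpow_natCast]; exact hwq)
  have h1w : (1 : ℂ) - w ≠ 0 := by simpa using hu 0
  have hP : ∀ n : ℕ, qPoch (w * q) q n ≠ 0 := by
    intro n
    refine Finset.prod_ne_zero_iff.mpr fun j _ => ?_
    have h : w * q * q ^ j = w * q ^ (j + 1) := by rw [pow_succ']; ring
    rw [h]; exact hu (j + 1)
  have hQ : ∀ n : ℕ, qPoch (w⁻¹ * q) q n ≠ 0 := by
    intro n
    refine Finset.prod_ne_zero_iff.mpr fun j _ => ?_
    have h : w⁻¹ * q * q ^ j = w⁻¹ * q ^ (j + 1) := by rw [pow_succ']; ring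
    rw [h]; exact hv j
  -- the series
  set B : ℕ → ℂ := fun n =>
    q ^ ((n + 1) ^ 2) / (qPoch (w * q) q (n + 1) * qPoch (w⁻¹ * q) q (n + 1)) with hBdef
  set C : ℕ → ℂ := fun n =>
    q ^ (n * (n + 1)) / (qPoch (w * q) q n * qPoch (w⁻¹ * q) q n) with hCdef
  -- step relations for qPoch
  have e1 : ∀ n : ℕ, qPoch (w * q) q (n + 1)
      = qPoch (w * q) q n * (1 - w * q ^ (n + 1)) := by
    intro n; rw [qPoch_succ]; congr 2; rw [pow_succ']; ring
  have e2 : ∀ n : ℕ, qPoch (w⁻¹ * q) q (n + 1)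
      = qPoch (w⁻¹ * q) q n * (1 - w⁻¹ * q ^ (n + 1)) := by
    intro n; rw [qPoch_succ]; congr 2; rw [pow_succ']; ring
  -- limits
  have hqlim : Tendsto (fun n : ℕ => q ^ (n + 1)) atTop (nhds 0) :=
    (tendsto_pow_atTop_nhds_zero_of_norm_lt_one hq).comp (tendsto_add_atTop_nat 1)
  have hfac : Tendsto (fun n : ℕ => ((1 - w * q ^ (n + 1)) * (1 - w⁻¹ * q ^ (n + 1)))⁻¹)
      atTop (nhds 1) := by
    have h1 : Tendsto (fun n : ℕ => 1 - w * q ^ (n + 1)) atTop (nhds 1) := by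
      simpa using tendsto_const_nhds.sub (hqlim.const_mul w)
    have h2 : Tendsto (fun n : ℕ => 1 - w⁻¹ * q ^ (n + 1)) atTop (nhds 1) := by
      simpa using tendsto_const_nhds.sub (hqlim.const_mul w⁻¹)
    simpa using (h1.mul h2).inv₀ (by norm_num)
  -- summability of C
  have hC : Summable C := by
    refine summable_of_ratio_tendsto_zero (g := fun n =>
      (q ^ (n + 1)) ^ 2 * ((1 - w * q ^ (n + 1)) * (1 - w⁻¹ * q ^ (n + 1)))⁻¹) ?_ ?_
    · intro n
      have e3 : (n + 1) * (n + 1 + 1) = n * (n + 1) + 2 * (n + 1) := by ring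
      simp only [hCdef, e1 n, e2 n, e3, pow_add, pow_mul' q 2 (n + 1)]
      have hPn := hP n; have hQn := hQ n
      have hun := hu (n + 1); have hvn := hv n
      field_simp
    · simpa using (hqlim.pow 2).mul hfac
  -- summability of B
  have hB : Summable B := by
    refine summable_of_ratio_tendsto_zero (g := fun n =>
      q ^ (n + 1) * q ^ (n + 2) * ((1 - w * q ^ (n + 2)) * (1 - w⁻¹ * q ^ (n + 2)))⁻¹) ?_ ?_
    · intro n
      have e3 : (n + 1 + 1) ^ 2 = (n + 1) ^ 2 + ((n + 1) + (n + 2)) := by ring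
      have e1' := e1 (n + 1); have e2' := e2 (n + 1)
      simp only [hBdef, e1', e2', e3, pow_add]
      have hPn := hP (n + 1); have hQn := hQ (n + 1)
      have hun := hu (n + 2); have hvn := hv (n + 1)
      field_simp
    · have hqlim2 : Tendsto (fun n : ℕ => q ^ (n + 2)) atTop (nhds 0) :=
        (tendsto_pow_atTop_nhds_zero_of_norm_lt_one hq).comp (tendsto_add_atTop_nat 2)
      have hfac2 : Tendsto (fun n : ℕ => ((1 - w * q ^ (n + 2)) * (1 - w⁻¹ * q ^ (n + 2)))⁻¹)
          atTop (nhds 1) := hfac.comp (tendsto_add_atTop_nat 1)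
      simpa using (hqlim.mul hqlim2).mul hfac2
  -- pointwise identity
  have hterm : ∀ n : ℕ,
      q ^ (n * (n + 1)) / (qPoch w q (n + 1) * qPoch (w⁻¹ * q) q (n + 1))
        = (1 / (1 - w)) * ((1 / w) * B n + (C n - C (n + 1))) := by
    intro n
    have hA' : q ^ (n * (n + 1)) / (qPoch w q (n + 1) * qPoch (w⁻¹ * q) q (n + 1))
        = q ^ (n * (n + 1)) / ((1 - w) * qPoch (w * q) q n
            * (qPoch (w⁻¹ * q) q n * (1 - w⁻¹ * q ^ (n + 1)))) := by
      rw [qPoch_succ' w q n, e2 n]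
    have hB' : B n = q ^ (n * (n + 1)) * q ^ (n + 1)
        / (qPoch (w * q) q n * (1 - w * q ^ (n + 1))
            * (qPoch (w⁻¹ * q) q n * (1 - w⁻¹ * q ^ (n + 1)))) := by
      have e3 : (n + 1) ^ 2 = n * (n + 1) + (n + 1) := by ring
      simp only [hBdef, e1 n, e2 n, e3, pow_add]
    have hC2 : C (n + 1) = q ^ (n * (n + 1)) * (q ^ (n + 1)) ^ 2
        / (qPoch (w * q) q n * (1 - w * q ^ (n + 1))
            * (qPoch (w⁻¹ * q) q n * (1 - w⁻¹ * q ^ (n + 1)))) := by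
      have e3 : (n + 1) * (n + 1 + 1) = n * (n + 1) + 2 * (n + 1) := by ring
      simp only [hCdef, e1 n, e2 n, e3, pow_add, pow_mul' q 2 (n + 1)]
    have hC1 : C n = q ^ (n * (n + 1)) / (qPoch (w * q) q n * qPoch (w⁻¹ * q) q n) := by
      simp only [hCdef]
    rw [hA', hB', hC1, hC2]
    refine key_alg w (q ^ (n + 1)) (q ^ (n * (n + 1))) _ _ (1 - w⁻¹ * q ^ (n + 1))
      hw h1w (hP n) (hQ n) (hu (n + 1)) (hv n) ?_
    field_simp
  rw [tsum_congr hterm]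
  have hCs : Summable (fun n => C (n + 1)) := (summable_nat_add_iff 1).mpr hC
  have hsub : Summable (fun n => C n - C (n + 1)) := hC.sub hCs
  have hBw : Summable (fun n => (1 / w) * B n) := hB.mul_left _
  rw [tsum_mul_left, Summable.tsum_add hBw hsub, tsum_mul_left]
  have htel : ∑' n : ℕ, (C n - C (n + 1)) = 1 := by
    rw [Summable.tsum_sub hC hCs, Summable.tsum_eq_zero_add hC]
    have hC0 : C 0 = 1 := by simp [hCdef, qPoch]
    rw [hC0]; ring
  rw [htel]
  field_simp
  ring
end

section
/- For |q|<1 and |w|>1 with w ∉ {q^{-ℓ} : ℓ ∈ ℕ}, one has (1+w)/(2w(1−w)) · O₂(w;q) = −(1+w)/(2w²) ∑_{n≥0} (−wq;q)_n/(wq;q)_n · w^{-n}, where O₂(w;q) := ∑_{n≥0} (−1;q)_n q^{n(n+1)/2}/((wq;q)_n (w^{-1}q;q)_n). -/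
set_option maxHeartbeats 1000000

namespace G22

lemma qPoch_succ (a q : ℂ) (n : ℕ) : qPoch a q (n+1) = qPoch a q n * (1 - a * q ^ n) :=
  Finset.prod_range_succ _ _

lemma qPoch_succ' (a q : ℂ) (n : ℕ) : qPoch a q (n+1) = (1 - a) * qPoch (a*q) q n := by
  rw [qPoch, Finset.prod_range_succ']
  simp only [pow_zero, mul_one, pow_succ]
  rw [qPoch, mul_comm]
  congr 1
  apply Finset.prod_congr rfl
  intro j _
  ring_nf

lemma qPoch_add (a q : ℂ) (n k : ℕ) :
    qPoch a q (n+k) = qPoch a q n * qPoch (a*q^n) q k := by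
  rw [qPoch, Finset.prod_range_add]
  congr 1
  apply Finset.prod_congr rfl
  intro j _
  rw [pow_add]; ring

lemma qPoch_zero (a q : ℂ) : qPoch a q 0 = 1 := rfl


variable {q : ℂ}

lemma small (hq : ‖q‖ < 1) (k : ℕ) : ‖q * q ^ k‖ < 1 := by
  rw [norm_mul, norm_pow]
  calc ‖q‖ * ‖q‖ ^ k ≤ ‖q‖ * 1 := by
        have := pow_le_one₀ (norm_nonneg q) hq.le (n := k)
        nlinarith [norm_nonneg q]
    _ < 1 := by simpa using hq

lemma one_sub_ne (hq : ‖q‖ < 1) (k : ℕ) : 1 - q * q ^ k ≠ 0 := by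
  intro h
  have h1 : q * q ^ k = 1 := by linear_combination -h
  have := small hq k
  rw [h1, norm_one] at this
  exact lt_irrefl _ this

noncomputable def Q (q : ℂ) (k : ℕ) : ℂ := qPoch q q k

lemma Q_ne (hq : ‖q‖ < 1) (k : ℕ) : Q q k ≠ 0 := by
  induction k with
  | zero => simp [Q, qPoch]
  | succ n ih =>
      rw [Q, qPoch, Finset.prod_range_succ]
      exact mul_ne_zero ih (by simpa [mul_comm] using one_sub_ne hq n)

lemma Q_succ (q : ℂ) (k : ℕ) : Q q (k+1) = Q q k * (1 - q * q ^ k) := by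
  rw [Q, Q, qPoch, qPoch, Finset.prod_range_succ]

noncomputable def g (q : ℂ) (n m : ℕ) : ℂ := Q q (n+m) / (Q q n * Q q m)

lemma g_zero_left (hq : ‖q‖ < 1) (m : ℕ) : g q 0 m = 1 := by
  rw [g]
  have : Q q 0 = 1 := by simp [Q, qPoch]
  rw [this, zero_add, one_mul, div_self (Q_ne hq m)]

lemma g_zero_right (hq : ‖q‖ < 1) (n : ℕ) : g q n 0 = 1 := by
  rw [g]
  have : Q q 0 = 1 := by simp [Q, qPoch]
  rw [this, add_zero, mul_one, div_self (Q_ne hq n)]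

lemma g_pascal (hq : ‖q‖ < 1) (a b : ℕ) :
    g q (a+1) (b+1) = q ^ (a+1) * g q (a+1) b + g q a (b+1) := by
  have h1 : (a+1) + (b+1) = (a+b+1)+1 := by omega
  have h2 : (a+1) + b = a+b+1 := by omega
  have h3 : a + (b+1) = a+b+1 := by omega
  rw [g, g, g, h1, h2, h3, Q_succ q (a+b+1), Q_succ q a, Q_succ q b]
  have e1 := Q_ne hq a
  have e2 := Q_ne hq b
  have e3 := Q_ne hq (a+b+1)
  have f1 := one_sub_ne hq a
  have f2 := one_sub_ne hq b
  field_simp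
  ring



lemma tri (n : ℕ) : (n+1)*(n+2)/2 = n*(n+1)/2 + (n+1) := by
  obtain ⟨k, hk⟩ := Nat.even_mul_succ_self n
  have h2 : (n+1)*(n+2) = n*(n+1) + 2*(n+1) := by ring
  omega

/-- terms of the finite identity -/
noncomputable def fiTerm (q v : ℂ) (N n : ℕ) : ℂ :=
  qPoch (-1) q n * v^n * q^(n*(n+1)/2) * qPoch (v*q^(n+1)) q (N-n)

noncomputable def P (q v : ℂ) (N : ℕ) : ℂ :=
  ∑ n ∈ Finset.range (N+1), g q n (N-n) * fiTerm q v N n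

lemma P_rec (hq : ‖q‖ < 1) (N : ℕ) (v : ℂ) :
    P q v (N+1) = (1 + v*q) * P q (v*q) N := by
  -- termwise key identity for n ≤ N
  have key : ∀ n ∈ Finset.range (N+1),
      q^n * g q n (N-n) * fiTerm q v (N+1) n + g q n (N-n) * fiTerm q v (N+1) (n+1)
        = (1 + v*q) * (g q n (N-n) * fiTerm q (v*q) N n) := by
    intro n hn
    have hnN : n ≤ N := Finset.mem_range_succ_iff.mp hn
    have h1 : N + 1 - n = (N - n) + 1 := by omega
    have h2 : N + 1 - (n+1) = N - n := by omega
    rw [fiTerm, fiTerm, fiTerm, h1, h2, qPoch_succ' (v*q^(n+1)) q (N-n),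
      qPoch_succ (-1) q n, tri n]
    have h3 : v * q^(n+1) * q = v*q * q^(n+1) := by ring
    have h4 : v * q^(n+2) = v*q * q^(n+1) := by ring
    rw [h3, h4, pow_add q (n*(n+1)/2) (n+1)]
    ring
  -- sum splitting
  have split : P q v (N+1)
      = ∑ n ∈ Finset.range (N+1), q^n * g q n (N-n) * fiTerm q v (N+1) n
      + ∑ n ∈ Finset.range (N+1), g q n (N-n) * fiTerm q v (N+1) (n+1) := by
    rw [P, Finset.sum_range_succ' (fun n => g q n (N+1-n) * fiTerm q v (N+1) n) (N+1)]
    rw [Finset.sum_range_succ (fun k => g q (k+1) (N+1-(k+1)) * fiTerm q v (N+1) (k+1)) N]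
    have pas : ∀ k ∈ Finset.range N,
        g q (k+1) (N+1-(k+1)) * fiTerm q v (N+1) (k+1)
          = q^(k+1) * g q (k+1) (N-(k+1)) * fiTerm q v (N+1) (k+1)
            + g q k (N-k) * fiTerm q v (N+1) (k+1) := by
      intro k hk
      have hkN : k < N := Finset.mem_range.mp hk
      have e1 : N+1-(k+1) = (N-1-k)+1 := by omega
      have e2 : N-(k+1) = N-1-k := by omega
      have e3 : N-k = (N-1-k)+1 := by omega
      rw [e1, e2, e3, g_pascal hq k (N-1-k)]
      ring
    rw [Finset.sum_congr rfl pas, Finset.sum_add_distrib]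
    -- now: g 0 (N+1) * T 0 + ((A + B) + g (N+1) 0 * T (N+1)) = E1 + E2
    have ga : g q 0 (N+1-0) = 1 := g_zero_left hq _
    have gb : g q (N+1) (N+1-(N+1)) = 1 := by
      rw [Nat.sub_self]; exact g_zero_right hq _
    have gc : g q 0 (N-0) = 1 := g_zero_left hq _
    have gd : g q N (N-N) = 1 := by
      have : N - N = 0 := by omega
      rw [this]; exact g_zero_right hq _
    -- E1 = ∑_{k<N} q^(k+1) g (k+1) (N-(k+1)) T (k+1) + T 0
    have hE1 : ∑ n ∈ Finset.range (N+1), q^n * g q n (N-n) * fiTerm q v (N+1) n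
        = ∑ k ∈ Finset.range N, q^(k+1) * g q (k+1) (N-(k+1)) * fiTerm q v (N+1) (k+1)
          + fiTerm q v (N+1) 0 := by
      rw [Finset.sum_range_succ' (fun n => q^n * g q n (N-n) * fiTerm q v (N+1) n) N]
      rw [gc]; ring
    have hE2 : ∑ n ∈ Finset.range (N+1), g q n (N-n) * fiTerm q v (N+1) (n+1)
        = ∑ k ∈ Finset.range N, g q k (N-k) * fiTerm q v (N+1) (k+1)
          + fiTerm q v (N+1) (N+1) := by
      rw [Finset.sum_range_succ (fun n => g q n (N-n) * fiTerm q v (N+1) (n+1)) N]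
      rw [gd]; ring
    rw [hE1, hE2, ga, gb]
    ring
  rw [split, ← Finset.sum_add_distrib, Finset.sum_congr rfl key, ← Finset.mul_sum, P]

lemma FI (hq : ‖q‖ < 1) : ∀ (N : ℕ) (v : ℂ), qPoch (-(v*q)) q N = P q v N := by
  intro N
  induction N with
  | zero =>
      intro v
      rw [qPoch_zero, P]
      simp [fiTerm, g_zero_left hq, qPoch_zero]
  | succ N ih =>
      intro v
      rw [P_rec hq N v, ← ih (v*q)]
      rw [qPoch_succ' (-(v*q)) q N]
      have : -(v*q)*q = -(v*q*q) := by ring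
      rw [this]
      ring_nf


lemma g_comm (n m : ℕ) : g q n m = g q m n := by
  rw [g, g, Nat.add_comm, mul_comm]

lemma g_pascal2 (hq : ‖q‖ < 1) (a b : ℕ) :
    g q (a+1) (b+1) = q ^ (b+1) * g q a (b+1) + g q (a+1) b := by
  rw [g_comm (a+1) (b+1), g_pascal hq b a, g_comm (b+1) a, g_comm b (a+1)]

lemma g_succ_right (hq : ‖q‖ < 1) (n m : ℕ) :
    g q n (m+1) = g q n m * ((1 - q^(n+1) * q^m) * (1 - q * q^m)⁻¹) := by
  have h1 : n + (m+1) = (n+m)+1 := by omega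
  rw [g, g, h1, Q_succ q (n+m), Q_succ q m]
  have e1 := Q_ne hq n
  have e2 := Q_ne hq m
  have e3 := Q_ne hq (n+m)
  have f1 := one_sub_ne hq m
  field_simp
  ring

/-- the summand of the Cauchy expansion -/
lemma gsummable (hq : ‖q‖ < 1) (n : ℕ) {t : ℂ} (ht : ‖t‖ < 1) :
    Summable (fun m : ℕ => g q n m * t^m) := by
  set r : ℝ := (1 + ‖t‖)/2 with hr
  have hr1 : r < 1 := by rw [hr]; linarith
  have htr : ‖t‖ < r := by rw [hr]; linarith
  have hpow : Filter.Tendsto (fun m : ℕ => q^m) Filter.atTop (nhds 0) :=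
    tendsto_pow_atTop_nhds_zero_of_norm_lt_one hq
  have h1 : Filter.Tendsto (fun m : ℕ => 1 - q^(n+1) * q^m) Filter.atTop (nhds 1) := by
    simpa using ((hpow.const_mul (q^(n+1))).const_sub 1)
  have h2 : Filter.Tendsto (fun m : ℕ => (1 - q * q^m)⁻¹) Filter.atTop (nhds 1) := by
    have h2' : Filter.Tendsto (fun m : ℕ => 1 - q * q^m) Filter.atTop (nhds 1) := by
      simpa using ((hpow.const_mul q).const_sub 1)
    simpa using h2'.inv₀ one_ne_zero
  have h3 : Filter.Tendsto
      (fun m : ℕ => ‖(1 - q^(n+1) * q^m) * (1 - q * q^m)⁻¹ * t‖) Filter.atTop (nhds ‖t‖) := by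
    have := ((h1.mul h2).mul_const t).norm
    simpa using this
  have hev : ∀ᶠ m in Filter.atTop,
      ‖(1 - q^(n+1) * q^m) * (1 - q * q^m)⁻¹ * t‖ < r := h3.eventually (gt_mem_nhds htr)
  apply summable_of_ratio_norm_eventually_le hr1
  filter_upwards [hev] with m hm
  have hrec : g q n (m+1) * t^(m+1)
      = (g q n m * t^m) * ((1 - q^(n+1) * q^m) * (1 - q * q^m)⁻¹ * t) := by
    rw [g_succ_right hq n m, pow_succ]
    ring
  rw [hrec, norm_mul]
  have h0 : (0:ℝ) ≤ ‖g q n m * t^m‖ := norm_nonneg _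
  nlinarith [norm_nonneg (g q n m * t^m), hm.le]

lemma cauchy_mul (hq : ‖q‖ < 1) :
    ∀ (n : ℕ) (t : ℂ), ‖t‖ < 1 → qPoch t q (n+1) * ∑' m : ℕ, g q n m * t^m = 1 := by
  intro n
  induction n with
  | zero =>
      intro t ht
      have h1 : (∑' m : ℕ, g q 0 m * t^m) = ∑' m : ℕ, t^m :=
        tsum_congr fun m => by rw [g_zero_left hq, one_mul]
      rw [h1, tsum_geometric_of_norm_lt_one ht, qPoch_succ' t q 0, qPoch_zero]
      have : (1:ℂ) - t ≠ 0 := by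
        intro h
        have : t = 1 := by linear_combination -h
        rw [this, norm_one] at ht; exact lt_irrefl _ ht
      simp [mul_inv_cancel₀ this]
  | succ n ih =>
      intro t ht
      have htq : ‖t * q‖ < 1 := by
        rw [norm_mul]
        nlinarith [norm_nonneg t, norm_nonneg q]
      have hs : Summable (fun m : ℕ => g q (n+1) m * t^m) := gsummable hq (n+1) ht
      have hs1 : Summable (fun m : ℕ => g q n (m+1) * (t*q)^(m+1)) :=
        (summable_nat_add_iff (f := fun m : ℕ => g q n m * (t*q)^m) 1).mpr
          (gsummable hq n htq)
      have hs2 : Summable (fun m : ℕ => t * (g q (n+1) m * t^m)) := hs.mul_left t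
      set S := ∑' m : ℕ, g q (n+1) m * t^m with hS
      have step1 : S = 1 + ∑' m : ℕ, g q (n+1) (m+1) * t^(m+1) := by
        rw [hS, Summable.tsum_eq_zero_add hs, g_zero_right hq, pow_zero, mul_one]
      have term : ∀ m : ℕ, g q (n+1) (m+1) * t^(m+1)
          = g q n (m+1) * (t*q)^(m+1) + t * (g q (n+1) m * t^m) := by
        intro m
        rw [g_pascal2 hq n m, mul_pow, pow_succ t m]
        ring
      have step2 : ∑' m : ℕ, g q (n+1) (m+1) * t^(m+1)
          = (∑' m : ℕ, g q n (m+1) * (t*q)^(m+1)) + ∑' m : ℕ, t * (g q (n+1) m * t^m) := by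
        rw [← Summable.tsum_add hs1 hs2]
        exact tsum_congr term
      have step3 : (∑' m : ℕ, g q n (m+1) * (t*q)^(m+1))
          = (∑' m : ℕ, g q n m * (t*q)^m) - 1 := by
        have := Summable.tsum_eq_zero_add (gsummable hq n htq)
        rw [g_zero_right hq, pow_zero, mul_one] at this
        linear_combination -this
      have step4 : (∑' m : ℕ, t * (g q (n+1) m * t^m)) = t * S := tsum_mul_left
      have key : (1 - t) * S = ∑' m : ℕ, g q n m * (t*q)^m := by
        have e1 : S = 1 + (((∑' m : ℕ, g q n m * (t*q)^m) - 1) + t * S) := by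
          conv_lhs => rw [step1, step2, step3, step4]
        linear_combination e1
      calc qPoch t q (n+2) * S = (1-t) * qPoch (t*q) q (n+1) * S := by
            rw [qPoch_succ' t q (n+1)]
        _ = qPoch (t*q) q (n+1) * ((1-t) * S) := by ring
        _ = qPoch (t*q) q (n+1) * ∑' m : ℕ, g q n m * (t*q)^m := by rw [key]
        _ = 1 := ih (t*q) htq
variable {w : ℂ}


section Main
variable (hq : ‖q‖ < 1) (hw : 1 < ‖w‖) (hw' : ∀ ℓ : ℕ, w ≠ (q ^ (ℓ + 1))⁻¹)

include hw in
lemma hw0 : w ≠ 0 := by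
  intro h; rw [h, norm_zero] at hw; linarith

include hw in
lemma hwinv : ‖w⁻¹‖ < 1 := by
  rw [norm_inv, inv_lt_one_iff₀]; right; exact hw

include hw' in
lemma wq_ne (k : ℕ) : 1 - w * q * q ^ k ≠ 0 := by
  intro h
  have h1 : w * q ^ (k+1) = 1 := by
    rw [pow_succ]; linear_combination -h
  exact hw' k (eq_inv_of_mul_eq_one_left (by linear_combination h1))

include hw' in
lemma qPoch_wq_ne (n : ℕ) : qPoch (w*q) q n ≠ 0 := by
  induction n with
  | zero => rw [qPoch_zero]; exact one_ne_zero
  | succ k ih =>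
      rw [qPoch_succ]
      refine mul_ne_zero ih ?_
      have := wq_ne (w := w) (q := q) hw' k
      intro h; apply this; linear_combination h

include hq in
lemma Q_bound (k : ℕ) : ‖Q q k‖ ≤ Real.exp ((1 - ‖q‖)⁻¹) := by
  have h1 : ‖Q q k‖ = ∏ j ∈ Finset.range k, ‖(1 : ℂ) - q * q ^ j‖ := by
    rw [Q, qPoch]; exact norm_prod _ _
  have h2 : ∏ j ∈ Finset.range k, ‖(1 : ℂ) - q * q ^ j‖
      ≤ ∏ j ∈ Finset.range k, Real.exp (‖q‖ ^ j) := by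
    apply Finset.prod_le_prod (fun j _ => norm_nonneg _)
    intro j _
    calc ‖(1 : ℂ) - q * q ^ j‖ ≤ ‖(1:ℂ)‖ + ‖q * q ^ j‖ := norm_sub_le _ _
      _ = 1 + ‖q‖ * ‖q‖ ^ j := by rw [norm_one, norm_mul, norm_pow]
      _ ≤ 1 + ‖q‖ ^ j := by
          have h0 : ‖q‖ ^ j ≤ 1 := pow_le_one₀ (norm_nonneg q) hq.le
          nlinarith [norm_nonneg q, pow_nonneg (norm_nonneg q) j]
      _ ≤ Real.exp (‖q‖ ^ j) := by
          have := Real.add_one_le_exp (‖q‖ ^ j); linarith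
  have h3 : ∏ j ∈ Finset.range k, Real.exp (‖q‖ ^ j)
      = Real.exp (∑ j ∈ Finset.range k, ‖q‖ ^ j) := by rw [Real.exp_sum]
  have h4 : ∑ j ∈ Finset.range k, ‖q‖ ^ j ≤ (1 - ‖q‖)⁻¹ := by
    have hs : Summable (fun j : ℕ => ‖q‖ ^ j) :=
      summable_geometric_of_lt_one (norm_nonneg q) hq
    have := Summable.sum_le_tsum (Finset.range k)
      (fun i _ => pow_nonneg (norm_nonneg q) i) hs
    rwa [tsum_geometric_of_lt_one (norm_nonneg q) hq] at this
  calc ‖Q q k‖ = _ := h1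
    _ ≤ _ := h2
    _ = _ := h3
    _ ≤ Real.exp ((1 - ‖q‖)⁻¹) := Real.exp_le_exp.mpr h4

/-- numerator of terms of O₂ over `(wq;q)_n`, divided further by `Q n` -/
noncomputable def F1 (q w : ℂ) (n : ℕ) : ℂ :=
  qPoch (-1) q n * q^(n*(n+1)/2) / qPoch (w*q) q n / Q q n

noncomputable def F2 (q w : ℂ) (m : ℕ) : ℂ := (w⁻¹)^m / Q q m

include hq hw' in
lemma F1_rec (n : ℕ) : F1 q w (n+1)
    = F1 q w n * ((1 + q^n) * (q * q^n) * ((1 - w*q*q^n) * (1 - q*q^n))⁻¹) := by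
  rw [F1, F1, qPoch_succ (-1) q n, qPoch_succ (w*q) q n, Q_succ, tri n,
    pow_add q (n*(n+1)/2) (n+1)]
  have d1 := qPoch_wq_ne (q := q) hw' n
  have d2 := Q_ne hq n
  have d3 := wq_ne (q := q) hw' n
  have d4 := one_sub_ne hq n
  have harg : (1 : ℂ) - w*q*q^n ≠ 0 := d3
  have harg2 : (1 : ℂ) - (w*q)*q^n ≠ 0 := by intro h; apply d3; linear_combination h
  field_simp
  ring

include hq hw' in
lemma F1_summable : Summable (fun n => F1 q w n) := by
  have hpow : Filter.Tendsto (fun n : ℕ => q^n) Filter.atTop (nhds 0) :=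
    tendsto_pow_atTop_nhds_zero_of_norm_lt_one hq
  have h1 : Filter.Tendsto (fun n : ℕ => (1 + q^n) * (q * q^n)) Filter.atTop (nhds 0) := by
    have a1 : Filter.Tendsto (fun n : ℕ => 1 + q^n) Filter.atTop (nhds 1) := by
      simpa using (hpow.const_add 1)
    have a2 : Filter.Tendsto (fun n : ℕ => q * q^n) Filter.atTop (nhds 0) := by
      simpa using hpow.const_mul q
    simpa using a1.mul a2
  have h2 : Filter.Tendsto (fun n : ℕ => ((1 - w*q*q^n) * (1 - q*q^n))⁻¹)
      Filter.atTop (nhds 1) := by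
    have b1 : Filter.Tendsto (fun n : ℕ => 1 - w*q*q^n) Filter.atTop (nhds 1) := by
      simpa using (hpow.const_mul (w*q)).const_sub 1
    have b2 : Filter.Tendsto (fun n : ℕ => 1 - q*q^n) Filter.atTop (nhds 1) := by
      simpa using (hpow.const_mul q).const_sub 1
    have := (b1.mul b2).inv₀ (by norm_num)
    simpa using this
  have h3 : Filter.Tendsto
      (fun n : ℕ => ‖(1 + q^n) * (q * q^n) * ((1 - w*q*q^n) * (1 - q*q^n))⁻¹‖)
      Filter.atTop (nhds 0) := by
    have := (h1.mul h2).norm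
    simpa using this
  have hev : ∀ᶠ n in Filter.atTop,
      ‖(1 + q^n) * (q * q^n) * ((1 - w*q*q^n) * (1 - q*q^n))⁻¹‖ < 1/2 :=
    h3.eventually (gt_mem_nhds (by norm_num))
  apply summable_of_ratio_norm_eventually_le (r := 1/2) (by norm_num)
  filter_upwards [hev] with n hn
  rw [F1_rec hq hw' n, norm_mul]
  nlinarith [norm_nonneg (F1 q w n), hn.le]

include hq hw in
lemma F2_summable : Summable (fun m => F2 q w m) := by
  have hpow : Filter.Tendsto (fun m : ℕ => q^m) Filter.atTop (nhds 0) :=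
    tendsto_pow_atTop_nhds_zero_of_norm_lt_one hq
  set r : ℝ := (1 + ‖w⁻¹‖)/2 with hr
  have hwi := hwinv (w := w) hw
  have hr1 : r < 1 := by rw [hr]; linarith
  have hlt : ‖w⁻¹‖ < r := by rw [hr]; linarith
  have h2 : Filter.Tendsto (fun m : ℕ => ‖w⁻¹ * (1 - q*q^m)⁻¹‖) Filter.atTop
      (nhds ‖w⁻¹‖) := by
    have b2 : Filter.Tendsto (fun m : ℕ => 1 - q*q^m) Filter.atTop (nhds 1) := by
      simpa using (hpow.const_mul q).const_sub 1
    have := ((b2.inv₀ (by norm_num)).const_mul w⁻¹).norm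
    simpa using this
  have hev : ∀ᶠ m in Filter.atTop, ‖w⁻¹ * (1 - q*q^m)⁻¹‖ < r :=
    h2.eventually (gt_mem_nhds hlt)
  apply summable_of_ratio_norm_eventually_le (r := r) hr1
  filter_upwards [hev] with m hm
  have hrec : F2 q w (m+1) = F2 q w m * (w⁻¹ * (1 - q*q^m)⁻¹) := by
    rw [F2, F2, Q_succ, pow_succ]
    have d2 := Q_ne hq m
    have d4 := one_sub_ne hq m
    field_simp
  rw [hrec, norm_mul]
  nlinarith [norm_nonneg (F2 q w m), hm.le]

/-- the double-sum function -/
noncomputable def dbl (q w : ℂ) (p : ℕ × ℕ) : ℂ :=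
  (qPoch (-1) q p.1 * q^(p.1*(p.1+1)/2) / qPoch (w*q) q p.1) * (g q p.1 p.2 * (w⁻¹)^p.2)

include hq hw hw' in
lemma dbl_summable : Summable (dbl q w) := by
  have hb : Summable (fun p : ℕ × ℕ => ‖F1 q w p.1‖ * ‖F2 q w p.2‖
      * Real.exp ((1 - ‖q‖)⁻¹)) := by
    apply Summable.mul_right
    exact Summable.mul_of_nonneg (summable_norm_iff.mpr (F1_summable hq hw'))
      (summable_norm_iff.mpr (F2_summable hq hw)) (fun n => norm_nonneg _)
      (fun m => norm_nonneg _)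
  apply Summable.of_norm_bounded hb
  intro p
  obtain ⟨n, m⟩ := p
  have key : dbl q w (n, m) = F1 q w n * F2 q w m * Q q (n+m) := by
    rw [dbl, F1, F2, g, div_eq_mul_inv, div_eq_mul_inv, div_eq_mul_inv,
      div_eq_mul_inv, mul_inv]
    ring
  rw [key, norm_mul, norm_mul]
  have h1 : ‖Q q (n+m)‖ ≤ Real.exp ((1 - ‖q‖)⁻¹) := Q_bound hq _
  nlinarith [norm_nonneg (F1 q w n), norm_nonneg (F2 q w m),
    mul_nonneg (norm_nonneg (F1 q w n)) (norm_nonneg (F2 q w m)), norm_nonneg (Q q (n+m))]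

include hq hw hw' in
theorem main_identity :
    (1 - w⁻¹)⁻¹ * ∑' n : ℕ, qPoch (-1) q n * q ^ (n * (n + 1) / 2)
        / (qPoch (w * q) q n * qPoch (w⁻¹ * q) q n)
      = ∑' n : ℕ, qPoch (-(w * q)) q n / qPoch (w * q) q n * (w ^ n)⁻¹ := by
  have hwi := hwinv (w := w) hw
  have hw0' := hw0 (w := w) hw
  have hsum := dbl_summable hq hw hw'
  -- Step A : double sum = (1-w⁻¹)⁻¹ * O₂
  have stepA : ∑' p : ℕ × ℕ, dbl q w p
      = (1 - w⁻¹)⁻¹ * ∑' n : ℕ, qPoch (-1) q n * q ^ (n * (n + 1) / 2)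
        / (qPoch (w * q) q n * qPoch (w⁻¹ * q) q n) := by
    rw [Summable.tsum_prod hsum]
    rw [← tsum_mul_left]
    apply tsum_congr
    intro n
    have hinner : ∑' m : ℕ, dbl q w (n, m)
        = (qPoch (-1) q n * q^(n*(n+1)/2) / qPoch (w*q) q n)
          * ∑' m : ℕ, g q n m * (w⁻¹)^m := by
      rw [← tsum_mul_left]
      exact tsum_congr fun m => by simp only [dbl]
    rw [hinner]
    have hc := cauchy_mul hq n w⁻¹ hwi
    have hpn : qPoch w⁻¹ q (n+1) ≠ 0 := left_ne_zero_of_mul_eq_one hc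
    have hT : (∑' m : ℕ, g q n m * (w⁻¹)^m) = (qPoch w⁻¹ q (n+1))⁻¹ :=
      eq_inv_of_mul_eq_one_left (by linear_combination hc)
    rw [hT, qPoch_succ' w⁻¹ q n, mul_inv]
    rw [div_eq_mul_inv, div_eq_mul_inv, mul_inv]
    ring
  -- Step B : double sum = S₂ by diagonal reindexing
  have stepB : ∑' p : ℕ × ℕ, dbl q w p
      = ∑' n : ℕ, qPoch (-(w * q)) q n / qPoch (w * q) q n * (w ^ n)⁻¹ := by
    rw [← Finset.HasAntidiagonal.sigmaAntidiagonalEquivProd.tsum_eq (dbl q w)]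
    have hsum' : Summable (fun x : (Σ N : ℕ, Finset.HasAntidiagonal.antidiagonal N) =>
        dbl q w (Finset.HasAntidiagonal.sigmaAntidiagonalEquivProd x)) :=
      Finset.HasAntidiagonal.sigmaAntidiagonalEquivProd.summable_iff.mpr hsum
    rw [Summable.tsum_sigma hsum']
    apply tsum_congr
    intro N
    have hfin : ∑' (c : Finset.HasAntidiagonal.antidiagonal N),
        dbl q w (Finset.HasAntidiagonal.sigmaAntidiagonalEquivProd ⟨N, c⟩)
          = ∑ p ∈ Finset.HasAntidiagonal.antidiagonal N, dbl q w p := by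
      exact Finset.tsum_subtype (Finset.HasAntidiagonal.antidiagonal N) (dbl q w)
    rw [hfin, Finset.Nat.sum_antidiagonal_eq_sum_range_succ_mk]
    -- termwise rewrite to FI terms
    have hterm : ∀ n ∈ Finset.range (N+1), dbl q w (n, N-n)
        = g q n (N-n) * fiTerm q w N n * ((qPoch (w*q) q N)⁻¹ * (w^N)⁻¹) := by
      intro n hn
      have hnN : n ≤ N := Finset.mem_range_succ_iff.mp hn
      have hsplit : qPoch (w*q) q N = qPoch (w*q) q n * qPoch (w*q^(n+1)) q (N-n) := by
        have h := qPoch_add (w*q) q n (N-n)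
        rw [show n + (N-n) = N from by omega] at h
        have harg : w*q*q^n = w*q^(n+1) := by rw [pow_succ]; ring
        rw [harg] at h
        exact h
      have hwn : w^N = w^n * w^(N-n) := by
        rw [← pow_add]; congr 1; omega
      have d1 := qPoch_wq_ne (q := q) hw' n
      have d2 : qPoch (w*q^(n+1)) q (N-n) ≠ 0 := by
        have hN := qPoch_wq_ne (q := q) hw' N
        rw [hsplit] at hN
        exact (mul_ne_zero_iff.mp hN).2
      have hwnn : w^n ≠ 0 := pow_ne_zero n hw0'
      have hwmm : w^(N-n) ≠ 0 := pow_ne_zero _ hw0'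
      rw [dbl, fiTerm, hsplit, hwn, inv_pow]
      field_simp
    rw [Finset.sum_congr rfl hterm, ← Finset.sum_mul, ← P, ← FI hq N w,
      div_eq_mul_inv]
    ring
  exact stepA.symm.trans stepB

end Main
end G22

theorem g22_eq_g23 (w q : ℂ) (hq : ‖q‖ < 1) (hw : 1 < ‖w‖)
    (hw' : ∀ ℓ : ℕ, w ≠ (q ^ (ℓ + 1))⁻¹) :
    (1 + w) / (2 * w * (1 - w))
        * ∑' n : ℕ, qPoch (-1) q n * q ^ (n * (n + 1) / 2)
            / (qPoch (w * q) q n * qPoch (w⁻¹ * q) q n)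
      = -((1 + w) / (2 * w ^ 2)) * ∑' n : ℕ, qPoch (-(w * q)) q n / qPoch (w * q) q n * (w ^ n)⁻¹ := by
  have hmain := G22.main_identity hq hw hw'
  have hw0 : w ≠ 0 := G22.hw0 hw
  have hwi : ‖w⁻¹‖ < 1 := G22.hwinv hw
  have hw1 : (1:ℂ) - w ≠ 0 := by
    intro h
    have : w = 1 := by linear_combination -h
    rw [this, norm_one] at hw; exact lt_irrefl _ hw
  have h1wi : (1:ℂ) - w⁻¹ ≠ 0 := by
    intro h
    have : w⁻¹ = 1 := by linear_combination -h
    rw [this, norm_one] at hwi; exact lt_irrefl _ hwi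
  rw [← hmain]
  have hwm1 : w - 1 ≠ 0 := by intro h; apply hw1; linear_combination -h
  have h2 : 1 - w⁻¹ = (w-1)/w := by field_simp
  have hc : (1 + w) / (2 * w * (1 - w)) = -((1 + w) / (2 * w ^ 2)) * (1 - w⁻¹)⁻¹ := by
    rw [h2, inv_div]
    field_simp
    ring
  rw [hc, mul_assoc]
end

section
/- For |q|<1 and |w|>1 with w ∉ {q^ℓ : ℓ ∈ ℕ}, the series g_{2,3}(w;q^{-1}) := −(1+w)/(2w²) ∑_{n≥0} (−wq^{-1};q^{-1})_n/(wq^{-1};q^{-1})_n · w^{-n} − 1/(2w) equals ψ₃(w^{-1};q) := ∑_{n≥0} (−1)^{n+1} w^{−(2n+1)} q^{n²}. -/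
namespace G23
open Finset Filter Topology

/-- the product `∏_{j=1}^n (1+a q^j)/(1-a q^j)` -/
noncomputable def c (a q : ℂ) (n : ℕ) : ℂ :=
  ∏ j ∈ Finset.range n, ((1 + a * q ^ (j+1)) / (1 - a * q ^ (j+1)))

@[simp] lemma c_zero (a q : ℂ) : c a q 0 = 1 := by simp [c]

lemma c_succ (a q : ℂ) (n : ℕ) :
    c a q (n+1) = c a q n * ((1 + a * q ^ (n+1)) / (1 - a * q ^ (n+1))) :=
  Finset.prod_range_succ _ _

lemma ratio_norm_le {z : ℂ} {ρ : ℝ} (hz : ‖z‖ ≤ ρ) (hρ : ρ < 1) :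
    ‖(1 + z) / (1 - z)‖ ≤ Real.exp (2 * ‖z‖ / (1 - ρ)) := by
  have h0 : (0:ℝ) ≤ ‖z‖ := norm_nonneg _
  have hρ0 : (0:ℝ) < 1 - ρ := by linarith
  have ht1 : ‖z‖ < 1 := lt_of_le_of_lt hz hρ
  have hden : (1:ℝ) - ‖z‖ ≤ ‖(1:ℂ) - z‖ := by
    calc (1:ℝ) - ‖z‖ = ‖(1:ℂ)‖ - ‖z‖ := by simp
    _ ≤ ‖(1:ℂ) - z‖ := norm_sub_norm_le _ _
  have hnum : ‖(1:ℂ) + z‖ ≤ 1 + ‖z‖ := by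
    calc ‖(1:ℂ) + z‖ ≤ ‖(1:ℂ)‖ + ‖z‖ := norm_add_le _ _
    _ = 1 + ‖z‖ := by simp
  have hd0 : (0:ℝ) < 1 - ‖z‖ := by linarith
  have h1 : ‖(1 + z) / (1 - z)‖ ≤ (1 + ‖z‖) / (1 - ‖z‖) := by
    rw [norm_div]
    exact div_le_div₀ (by linarith) hnum hd0 hden
  have h2 : (1 + ‖z‖) / (1 - ‖z‖) = 1 + 2 * ‖z‖ / (1 - ‖z‖) := by
    have key : ∀ t : ℝ, t < 1 → (1+t)/(1-t) = 1 + 2*t/(1-t) := by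
      intro t ht
      have hne : 1 - t ≠ 0 := by
        intro h; rw [sub_eq_zero] at h; exact absurd h.symm (ne_of_lt ht)
      field_simp
      ring
    exact key _ ht1
  have h3 : 2 * ‖z‖ / (1 - ‖z‖) ≤ 2 * ‖z‖ / (1 - ρ) := by
    apply div_le_div_of_nonneg_left (by linarith) hρ0 (by linarith)
  have h4 : 2 * ‖z‖ / (1 - ρ) + 1 ≤ Real.exp (2 * ‖z‖ / (1 - ρ)) :=
    Real.add_one_le_exp _
  calc ‖(1 + z) / (1 - z)‖ ≤ (1 + ‖z‖) / (1 - ‖z‖) := h1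
  _ = 1 + 2 * ‖z‖ / (1 - ‖z‖) := h2
  _ ≤ 1 + 2 * ‖z‖ / (1 - ρ) := by linarith
  _ ≤ Real.exp (2 * ‖z‖ / (1 - ρ)) := by linarith

/-- uniform bound constant for `c x q n` over `‖x‖ ≤ s`. -/
noncomputable def Cb (s r : ℝ) : ℝ := Real.exp (2 * s * r / (1 - s * r) * (1 - r)⁻¹)

lemma Cb_pos (s r : ℝ) : 0 < Cb s r := Real.exp_pos _

lemma c_norm_le {x q : ℂ} {s : ℝ} (hx : ‖x‖ ≤ s) (hs : s < 1) (hq : ‖q‖ < 1) (n : ℕ) :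
    ‖c x q n‖ ≤ Cb s ‖q‖ := by
  set r := ‖q‖ with hr
  have hr0 : (0:ℝ) ≤ r := norm_nonneg _
  have hs0 : (0:ℝ) ≤ s := le_trans (norm_nonneg _) hx
  have hρ : s * r < 1 := by nlinarith
  have hρ0 : (0:ℝ) ≤ s * r := mul_nonneg hs0 hr0
  have key : ∀ j : ℕ, ‖(1 + x * q ^ (j+1)) / (1 - x * q ^ (j+1))‖
      ≤ Real.exp (2 * s * r / (1 - s * r) * r ^ j) := by
    intro j
    have hz : ‖x * q ^ (j+1)‖ ≤ s * r ^ (j+1) := by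
      rw [norm_mul, norm_pow]
      exact mul_le_mul hx (le_refl _) (by positivity) hs0
    have hzρ : ‖x * q ^ (j+1)‖ ≤ s * r := by
      refine le_trans hz ?_
      have : r ^ (j+1) ≤ r := by
        calc r ^ (j+1) = r * r ^ j := by ring
        _ ≤ r * 1 := by
              apply mul_le_mul_of_nonneg_left _ hr0
              exact pow_le_one₀ hr0 (le_of_lt hq)
        _ = r := by ring
      nlinarith
    refine le_trans (ratio_norm_le hzρ hρ) ?_
    apply Real.exp_le_exp.mpr
    have : 2 * ‖x * q ^ (j+1)‖ ≤ 2 * (s * r ^ (j+1)) := by linarith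
    have h2 : 2 * ‖x * q ^ (j+1)‖ / (1 - s * r) ≤ 2 * (s * r ^ (j+1)) / (1 - s * r) := by
      apply div_le_div_of_nonneg_right this (by linarith)
    calc 2 * ‖x * q ^ (j+1)‖ / (1 - s * r) ≤ 2 * (s * r ^ (j+1)) / (1 - s * r) := h2
    _ = 2 * s * r / (1 - s * r) * r ^ j := by ring
  calc ‖c x q n‖ ≤ ∏ j ∈ Finset.range n, ‖(1 + x * q ^ (j+1)) / (1 - x * q ^ (j+1))‖ := by
        rw [c]; exact norm_prod_le _ _
  _ ≤ ∏ j ∈ Finset.range n, Real.exp (2 * s * r / (1 - s * r) * r ^ j) := by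
        apply Finset.prod_le_prod (fun j _ => norm_nonneg _) (fun j _ => key j)
  _ = Real.exp (∑ j ∈ Finset.range n, 2 * s * r / (1 - s * r) * r ^ j) := (Real.exp_sum _ _).symm
  _ = Real.exp (2 * s * r / (1 - s * r) * ∑ j ∈ Finset.range n, r ^ j) := by
        rw [Finset.mul_sum]
  _ ≤ Cb s r := by
        apply Real.exp_le_exp.mpr
        have hnn : (0:ℝ) ≤ 2 * s * r / (1 - s * r) := by
          apply div_nonneg (by positivity) (by linarith)
        apply mul_le_mul_of_nonneg_left _ hnn
        refine Summable.sum_le_tsum (L := SummationFilter.unconditional ℕ) (f := fun j : ℕ => r ^ j) (Finset.range n) (fun j _ => by positivity) ?_ |>.trans ?_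
        · exact summable_geometric_of_lt_one hr0 hq
        · rw [tsum_geometric_of_lt_one hr0 hq]


section FE

variable {a q : ℂ}

/-- `Φ(a) = (1+a) ∑_{n≥0} (-a)^n c_n(a)` -/
noncomputable def Phi (a q : ℂ) : ℂ := (1 + a) * ∑' n : ℕ, (-a) ^ n * c a q n

/-- `θ(a) = ∑ (-1)^n a^{2n} q^{n²}` -/
noncomputable def theta (a q : ℂ) : ℂ := ∑' n : ℕ, (-1) ^ n * a ^ (2*n) * q ^ (n^2)

lemma summable_aux (ha : ‖a‖ < 1) (hq : ‖q‖ < 1) (g : ℕ → ℂ) (M : ℝ)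
    (hg : ∀ n, ‖g n‖ ≤ M * ‖a‖ ^ n) : Summable g :=
  Summable.of_norm_bounded
    ((summable_geometric_of_lt_one (norm_nonneg a) ha).mul_left M) hg

lemma summable_main (ha : ‖a‖ < 1) (hq : ‖q‖ < 1) :
    Summable (fun n : ℕ => (-a) ^ n * c a q n) := by
  apply summable_aux ha hq _ (Cb ‖a‖ ‖q‖)
  intro n
  rw [norm_mul, norm_pow, norm_neg, mul_comm]
  exact mul_le_mul (c_norm_le (le_refl _) ha hq n) (le_refl _) (by positivity)
    (le_of_lt (Cb_pos _ _))

lemma summable_theta (ha : ‖a‖ < 1) (hq : ‖q‖ < 1) :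
    Summable (fun n : ℕ => (-1:ℂ) ^ n * a ^ (2*n) * q ^ (n^2)) := by
  apply summable_aux ha hq _ 1
  intro n
  rw [norm_mul, norm_mul, norm_pow, norm_pow, norm_pow]
  have h1 : ‖(-1:ℂ)‖ = 1 := by simp
  rw [h1, one_pow, one_mul, one_mul]
  have h2 : ‖q‖ ^ (n^2) ≤ 1 := pow_le_one₀ (norm_nonneg _) (le_of_lt hq)
  have h3 : ‖a‖ ^ (2*n) ≤ ‖a‖ ^ n := by
    apply pow_le_pow_of_le_one (norm_nonneg _) (le_of_lt ha)
    omega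
  nlinarith [pow_nonneg (norm_nonneg a) (2*n), pow_nonneg (norm_nonneg a) n,
    pow_nonneg (norm_nonneg q) (n^2)]

/-- the telescoping sequence -/
noncomputable def bb (a q : ℂ) (n : ℕ) : ℂ := (-a) ^ n * ((1 - a * q ^ n) * c a q n)

lemma bb_norm_le (ha : ‖a‖ < 1) (hq : ‖q‖ < 1) (n : ℕ) :
    ‖bb a q n‖ ≤ 2 * Cb ‖a‖ ‖q‖ * ‖a‖ ^ n := by
  rw [bb, norm_mul, norm_mul, norm_pow, norm_neg]
  have h1 : ‖(1:ℂ) - a * q ^ n‖ ≤ 2 := by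
    calc ‖(1:ℂ) - a * q ^ n‖ ≤ ‖(1:ℂ)‖ + ‖a * q ^ n‖ := norm_sub_le _ _
    _ ≤ 1 + 1 := by
        gcongr
        · simp
        · rw [norm_mul, norm_pow]
          have := pow_le_one₀ (norm_nonneg q) (le_of_lt hq) (n := n)
          nlinarith [norm_nonneg a, pow_nonneg (norm_nonneg q) n]
    _ = 2 := by norm_num
  have h2 := c_norm_le (le_refl ‖a‖) ha hq (q := q) n
  have h3 : (0:ℝ) ≤ ‖a‖ ^ n := by positivity
  have h4 : (0:ℝ) < Cb ‖a‖ ‖q‖ := Cb_pos _ _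
  calc ‖a‖ ^ n * (‖(1:ℂ) - a * q ^ n‖ * ‖c a q n‖)
      ≤ ‖a‖ ^ n * (2 * Cb ‖a‖ ‖q‖) := by
        apply mul_le_mul_of_nonneg_left _ h3
        exact mul_le_mul h1 h2 (norm_nonneg _) (by norm_num)
  _ = 2 * Cb ‖a‖ ‖q‖ * ‖a‖ ^ n := by ring

lemma bb_tendsto (ha : ‖a‖ < 1) (hq : ‖q‖ < 1) :
    Tendsto (fun n => bb a q n) atTop (𝓝 0) := by
  apply squeeze_zero_norm (bb_norm_le ha hq)
  have : Tendsto (fun n : ℕ => ‖a‖ ^ n) atTop (𝓝 0) :=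
    tendsto_pow_atTop_nhds_zero_of_lt_one (norm_nonneg a) ha
  have := this.const_mul (2 * Cb ‖a‖ ‖q‖)
  simpa using this

lemma summable_bb (ha : ‖a‖ < 1) (hq : ‖q‖ < 1) : Summable (bb a q) :=
  summable_aux ha hq _ _ (bb_norm_le ha hq)

/-- telescoping tsum -/
lemma tsum_bb_telescope (ha : ‖a‖ < 1) (hq : ‖q‖ < 1) :
    ∑' n : ℕ, (bb a q (n+1) - bb a q (n+2)) = bb a q 1 := by
  have hs : Summable (fun n : ℕ => bb a q (n+1) - bb a q (n+2)) := by
    apply Summable.sub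
    · exact (summable_nat_add_iff 1).mpr (summable_bb ha hq)
    · exact (summable_nat_add_iff 2).mpr (summable_bb ha hq)
  have h1 : Tendsto (fun N : ℕ => ∑ i ∈ Finset.range N, (bb a q (i+1) - bb a q (i+2)))
      atTop (𝓝 (bb a q 1)) := by
    have heq : ∀ N : ℕ, ∑ i ∈ Finset.range N, (bb a q (i+1) - bb a q (i+2))
        = bb a q 1 - bb a q (N+1) := by
      intro N
      exact Finset.sum_range_sub' (fun i => bb a q (i+1)) N
    simp_rw [heq]
    have h2 : Tendsto (fun N : ℕ => bb a q (N+1)) atTop (𝓝 0) :=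
      (bb_tendsto ha hq).comp (tendsto_add_atTop_nat 1)
    have := (tendsto_const_nhds (x := bb a q 1) (f := atTop (α := ℕ))).sub h2
    simpa using this
  exact tendsto_nhds_unique (hs.hasSum.tendsto_sum_nat) h1

lemma c_rec (n : ℕ) (hden : 1 - a * q ^ (n+1) ≠ 0) :
    (1 - a * q ^ (n+1)) * c a q (n+1) = (1 + a * q ^ (n+1)) * c a q n := by
  rw [c_succ]
  field_simp

lemma c_shift (n : ℕ) (hden : 1 - a * q ≠ 0) :
    (1 + a * q) * c (a*q) q n = (1 - a * q) * c a q (n+1) := by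
  have h1 : c a q (n+1) = (∏ j ∈ Finset.range n, ((1 + a * q ^ (j+2)) / (1 - a * q ^ (j+2))))
      * ((1 + a * q) / (1 - a * q)) := by
    rw [c, Finset.prod_range_succ']
    simp [pow_succ]
  have h2 : c (a*q) q n = ∏ j ∈ Finset.range n, ((1 + a * q ^ (j+2)) / (1 - a * q ^ (j+2))) := by
    rw [c]
    apply Finset.prod_congr rfl
    intro j _
    have : a * q * q ^ (j+1) = a * q ^ (j+2) := by ring
    rw [this]
  rw [h2, h1, mul_comm (1 - a*q), mul_assoc, div_mul_cancel₀ _ hden, mul_comm]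

/-- The functional equation for Φ. -/
lemma phi_fe (ha : ‖a‖ < 1) (hq : ‖q‖ < 1) (hden : ∀ j : ℕ, 1 - a * q ^ (j+1) ≠ 0) :
    Phi a q = 1 - a^2*q - a^2*q * Phi (a*q) q := by
  have haq : ‖a * q‖ < 1 := by
    rw [norm_mul]
    nlinarith [norm_nonneg a, norm_nonneg q]
  have hden1 : 1 - a * q ≠ 0 := by simpa using hden 0
  -- A n = (1+a) * (-a)^n * c a q n
  set A : ℕ → ℂ := fun n => (1 + a) * ((-a) ^ n * c a q n) with hA
  set B : ℕ → ℂ := fun n => a^2*q*(1+a*q) * ((-(a*q)) ^ n * c (a*q) q n) with hB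
  have hsumA : Summable A := (summable_main ha hq).mul_left _
  have hsumB : Summable B := (summable_main haq hq).mul_left _
  have hsumA' : Summable (fun n => A (n+1)) := (summable_nat_add_iff 1).mpr hsumA
  have hPhiA : Phi a q = ∑' n, A n := by
    rw [Phi, ← tsum_mul_left]
  have hPhiB : a^2*q * Phi (a*q) q = ∑' n, B n := by
    rw [Phi, ← tsum_mul_left]
    rw [← tsum_mul_left]
    apply tsum_congr
    intro n
    ring
  -- termwise : A (n+1) + B n = bb (n+1) - bb (n+2)
  have hterm : ∀ n : ℕ, A (n+1) + B n = bb a q (n+1) - bb a q (n+2) := by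
    intro n
    have e1 : (1 + a*q) * c (a*q) q n = (1 - a*q) * c a q (n+1) := c_shift n hden1
    have e2 : (1 - a * q ^ (n+2)) * c a q (n+2) = (1 + a * q ^ (n+2)) * c a q (n+1) :=
      c_rec (n+1) (hden (n+1))
    have e1' : a^2*q*(1+a*q) * ((-(a*q))^n * c (a*q) q n)
        = a^2*q*(-(a*q))^n * ((1-a*q) * c a q (n+1)) := by
      rw [← e1]; ring
    rw [hA, hB]
    dsimp only
    rw [bb, bb, e1', e2]
    have hp1 : (-(a*q))^n = (-a)^n * q^n := by
      rw [show -(a*q) = (-a)*q by ring, mul_pow]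
    simp only [hp1, pow_succ]
    ring
  have hsum_term : ∑' n, (A (n+1) + B n) = bb a q 1 := by
    calc ∑' n, (A (n+1) + B n) = ∑' n, (bb a q (n+1) - bb a q (n+2)) := tsum_congr hterm
    _ = bb a q 1 := tsum_bb_telescope ha hq
  have hsplit : ∑' n, (A (n+1) + B n) = (∑' n, A (n+1)) + ∑' n, B n := Summable.tsum_add hsumA' hsumB
  have hA0 : ∑' n, A n = A 0 + ∑' n, A (n+1) := Summable.tsum_eq_zero_add hsumA
  have hbb1 : bb a q 1 = -(a + a^2*q) := by
    have h1 : (1 - a*q^(0+1)) * c a q (0+1) = (1 + a*q^(0+1)) * c a q 0 := c_rec 0 (hden 0)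
    simp only [zero_add, c_zero, mul_one, pow_one] at h1
    rw [bb]
    simp only [pow_one]
    rw [h1]
    ring
  have hA0v : A 0 = 1 + a := by simp [hA]
  have hcomb : Phi a q + a^2*q * Phi (a*q) q = 1 - a^2*q := by
    rw [hPhiA, hPhiB, hA0, hA0v]
    have h := hsplit.symm.trans hsum_term
    rw [hbb1] at h
    linear_combination h
  linear_combination hcomb

lemma theta_fe (ha : ‖a‖ < 1) (hq : ‖q‖ < 1) :
    theta a q = 1 - a^2*q * theta (a*q) q := by
  have h0 : theta a q = 1 + ∑' n : ℕ, ((-1:ℂ)) ^ (n+1) * a ^ (2*(n+1)) * q ^ ((n+1)^2) := by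
    rw [theta, Summable.tsum_eq_zero_add (summable_theta ha hq)]
    norm_num
  have hterm : ∀ n : ℕ, ((-1:ℂ)) ^ (n+1) * a ^ (2*(n+1)) * q ^ ((n+1)^2)
      = -(a^2*q) * ((-1:ℂ) ^ n * (a*q) ^ (2*n) * q ^ (n^2)) := by
    intro n
    have e1 : (n+1)^2 = n^2 + (2*n + 1) := by ring
    have e2 : 2*(n+1) = 2*n + 2 := by ring
    rw [e1, e2, pow_add, pow_add, pow_add, mul_pow, pow_succ]
    ring
  rw [h0]
  rw [tsum_congr hterm, tsum_mul_left]
  rw [theta]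
  ring

lemma norm_x_le (m : ℕ) (hq : ‖q‖ < 1) : ‖a * q ^ m‖ ≤ ‖a‖ := by
  rw [norm_mul, norm_pow]
  have : ‖q‖ ^ m ≤ 1 := pow_le_one₀ (norm_nonneg _) (le_of_lt hq)
  nlinarith [norm_nonneg a]

/-- uniform bound for `‖Phi x q - (2 theta x q - 1)‖` when `‖x‖ ≤ ‖a‖` -/
noncomputable def Mb (a q : ℂ) : ℝ :=
  (1 + ‖a‖) * (Cb ‖a‖ ‖q‖ * (1 - ‖a‖)⁻¹) + (2 * (1 - ‖a‖^2)⁻¹ + 1)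

lemma D_bound {x : ℂ} (ha : ‖a‖ < 1) (hq : ‖q‖ < 1) (hx : ‖x‖ ≤ ‖a‖) :
    ‖Phi x q - (2 * theta x q - 1)‖ ≤ Mb a q := by
  have hx1 : ‖x‖ < 1 := lt_of_le_of_lt hx ha
  have h1a : (0:ℝ) < 1 - ‖a‖ := by linarith
  have h1a2 : (0:ℝ) < 1 - ‖a‖^2 := by nlinarith [norm_nonneg a]
  have hCb := Cb_pos ‖a‖ ‖q‖
  -- bound on Phi
  have hterm : ∀ n : ℕ, ‖(-x) ^ n * c x q n‖ ≤ Cb ‖a‖ ‖q‖ * ‖a‖ ^ n := by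
    intro n
    rw [norm_mul, norm_pow, norm_neg, mul_comm]
    apply mul_le_mul (c_norm_le hx ha hq n) _ (by positivity) (le_of_lt hCb)
    exact pow_le_pow_left₀ (norm_nonneg _) hx n
  have hsnorm : Summable (fun n : ℕ => ‖(-x) ^ n * c x q n‖) := by
    apply Summable.of_nonneg_of_le (fun n => norm_nonneg _) hterm
    exact (summable_geometric_of_lt_one (norm_nonneg a) ha).mul_left _
  have hPhi : ‖Phi x q‖ ≤ (1 + ‖a‖) * (Cb ‖a‖ ‖q‖ * (1 - ‖a‖)⁻¹) := by
    rw [Phi, norm_mul]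
    apply mul_le_mul
    · calc ‖1 + x‖ ≤ ‖(1:ℂ)‖ + ‖x‖ := norm_add_le _ _
      _ ≤ 1 + ‖a‖ := by simp only [norm_one]; linarith
    · calc ‖∑' n : ℕ, (-x) ^ n * c x q n‖ ≤ ∑' n : ℕ, ‖(-x) ^ n * c x q n‖ :=
          norm_tsum_le_tsum_norm hsnorm
      _ ≤ ∑' n : ℕ, Cb ‖a‖ ‖q‖ * ‖a‖ ^ n := by
          apply Summable.tsum_le_tsum hterm hsnorm
          exact (summable_geometric_of_lt_one (norm_nonneg a) ha).mul_left _
      _ = Cb ‖a‖ ‖q‖ * (1 - ‖a‖)⁻¹ := by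
          rw [tsum_mul_left, tsum_geometric_of_lt_one (norm_nonneg a) ha]
    · exact norm_nonneg _
    · positivity
  have hthterm : ∀ n : ℕ, ‖(-1:ℂ) ^ n * x ^ (2*n) * q ^ (n^2)‖ ≤ (‖a‖^2) ^ n := by
    intro n
    rw [norm_mul, norm_mul, norm_pow, norm_pow, norm_pow]
    have h1 : ‖(-1:ℂ)‖ = 1 := by simp
    rw [h1, one_pow, one_mul]
    have h2 : ‖q‖ ^ (n^2) ≤ 1 := pow_le_one₀ (norm_nonneg _) (le_of_lt hq)
    have h3 : ‖x‖ ^ (2*n) ≤ ‖a‖ ^ (2*n) := pow_le_pow_left₀ (norm_nonneg _) hx _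
    have h4 : (‖a‖:ℝ) ^ (2*n) = (‖a‖^2)^n := by rw [← pow_mul]
    nlinarith [pow_nonneg (norm_nonneg x) (2*n), pow_nonneg (norm_nonneg q) (n^2),
      pow_nonneg (norm_nonneg a) (2*n)]
  have ha2 : ‖a‖^2 < 1 := by nlinarith [norm_nonneg a]
  have ha20 : (0:ℝ) ≤ ‖a‖^2 := by positivity
  have hth : ‖theta x q‖ ≤ (1 - ‖a‖^2)⁻¹ := by
    rw [theta]
    calc ‖∑' n : ℕ, (-1:ℂ) ^ n * x ^ (2*n) * q ^ (n^2)‖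
        ≤ ∑' n : ℕ, ‖(-1:ℂ) ^ n * x ^ (2*n) * q ^ (n^2)‖ := by
          apply norm_tsum_le_tsum_norm
          apply Summable.of_nonneg_of_le (fun n => norm_nonneg _) hthterm
          exact summable_geometric_of_lt_one ha20 ha2
      _ ≤ ∑' n : ℕ, (‖a‖^2) ^ n := by
          apply Summable.tsum_le_tsum hthterm _ (summable_geometric_of_lt_one ha20 ha2)
          apply Summable.of_nonneg_of_le (fun n => norm_nonneg _) hthterm
          exact summable_geometric_of_lt_one ha20 ha2
      _ = (1 - ‖a‖^2)⁻¹ := tsum_geometric_of_lt_one ha20 ha2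
  calc ‖Phi x q - (2 * theta x q - 1)‖ ≤ ‖Phi x q‖ + ‖2 * theta x q - 1‖ := norm_sub_le _ _
  _ ≤ (1 + ‖a‖) * (Cb ‖a‖ ‖q‖ * (1 - ‖a‖)⁻¹) + (2 * (1 - ‖a‖^2)⁻¹ + 1) := by
      apply add_le_add hPhi
      calc ‖2 * theta x q - 1‖ ≤ ‖2 * theta x q‖ + ‖(1:ℂ)‖ := norm_sub_le _ _
      _ = 2 * ‖theta x q‖ + 1 := by rw [norm_mul]; norm_num
      _ ≤ 2 * (1 - ‖a‖^2)⁻¹ + 1 := by linarith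
  _ = Mb a q := rfl

/-- main identity: `Φ(a) = 2θ(a) - 1` -/
lemma phi_eq_theta (ha : ‖a‖ < 1) (hq : ‖q‖ < 1)
    (hden : ∀ j : ℕ, 1 - a * q ^ (j+1) ≠ 0) :
    Phi a q = 2 * theta a q - 1 := by
  set D : ℕ → ℂ := fun m => Phi (a * q ^ m) q - (2 * theta (a * q ^ m) q - 1) with hDdef
  have hxnorm : ∀ m : ℕ, ‖a * q ^ m‖ < 1 := fun m => lt_of_le_of_lt (norm_x_le m hq) ha
  have hD : ∀ m : ℕ, D m = -((a * q ^ m)^2 * q) * D (m+1) := by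
    intro m
    have hden' : ∀ j : ℕ, 1 - (a * q ^ m) * q ^ (j+1) ≠ 0 := by
      intro j
      have : a * q ^ m * q ^ (j+1) = a * q ^ ((m + j) + 1) := by
        rw [mul_assoc, ← pow_add, Nat.add_assoc]
      rw [this]
      exact hden (m + j)
    have hfe := phi_fe (hxnorm m) hq hden'
    have hth := theta_fe (a := a * q ^ m) (hxnorm m) hq
    have hshift : a * q ^ m * q = a * q ^ (m+1) := by rw [pow_succ]; ring
    rw [hshift] at hfe hth
    rw [hDdef]
    dsimp only
    rw [hfe, hth]
    ring
  have hprod : ∀ m : ℕ, D 0 = (∏ k ∈ Finset.range m, (-((a * q ^ k)^2 * q))) * D m := by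
    intro m
    induction m with
    | zero => simp
    | succ m ih =>
        rw [ih, hD m, Finset.prod_range_succ]
        ring
  have hMb : (0:ℝ) ≤ Mb a q :=
    le_trans (norm_nonneg (Phi a q - (2 * theta a q - 1))) (D_bound ha hq (le_refl ‖a‖))
  have ha2 : ‖a‖^2 < 1 := by nlinarith [norm_nonneg a]
  have ha20 : (0:ℝ) ≤ ‖a‖^2 := by positivity
  have hbound : ∀ m : ℕ, ‖D 0‖ ≤ (‖a‖^2)^m * Mb a q := by
    intro m
    rw [hprod m, norm_mul]
    apply mul_le_mul _ _ (norm_nonneg _) (by positivity)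
    · calc ‖∏ k ∈ Finset.range m, (-((a * q ^ k)^2 * q))‖
          ≤ ∏ k ∈ Finset.range m, ‖(-((a * q ^ k)^2 * q))‖ := norm_prod_le _ _
      _ ≤ ∏ k ∈ Finset.range m, ‖a‖^2 := by
          apply Finset.prod_le_prod (fun k _ => norm_nonneg _)
          intro k _
          rw [norm_neg, norm_mul, norm_pow]
          have h1 := norm_x_le (a := a) (q := q) k hq
          have h2 : ‖q‖ ≤ 1 := le_of_lt hq
          nlinarith [norm_nonneg (a * q ^ k), norm_nonneg q]
      _ = (‖a‖^2)^m := by rw [Finset.prod_const, Finset.card_range]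
    · exact D_bound ha hq (norm_x_le m hq)
  have hlim : Tendsto (fun m : ℕ => (‖a‖^2)^m * Mb a q) atTop (𝓝 0) := by
    have := (tendsto_pow_atTop_nhds_zero_of_lt_one ha20 ha2).mul_const (Mb a q)
    simpa using this
  have hle : ‖D 0‖ ≤ 0 := ge_of_tendsto' hlim hbound
  have hD0 : D 0 = 0 := by rwa [norm_le_zero_iff] at hle
  rw [hDdef] at hD0
  dsimp only at hD0
  rw [pow_zero, mul_one] at hD0
  linear_combination hD0

end FE

/-- conversion of the base-`q⁻¹` Pochhammer ratio -/
lemma ratio_eq {w q : ℂ} (hw0 : w ≠ 0) (hq0 : q ≠ 0)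
    (hden : ∀ j : ℕ, 1 - w⁻¹ * q ^ (j+1) ≠ 0) (n : ℕ) :
    qPoch (-(w * q⁻¹)) q⁻¹ n / qPoch (w * q⁻¹) q⁻¹ n = (-1) ^ n * c w⁻¹ q n := by
  induction n with
  | zero => simp [qPoch, c]
  | succ n ih =>
      have hqn : (q:ℂ) ^ (n+1) ≠ 0 := pow_ne_zero _ hq0
      have ht : w * (q⁻¹) ^ (n+1) ≠ 0 := by
        apply mul_ne_zero hw0
        exact pow_ne_zero _ (inv_ne_zero hq0)
      have hww : w * w⁻¹ = 1 := mul_inv_cancel₀ hw0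
      have hqq : q⁻¹ ^ (n+1) * q ^ (n+1) = 1 := by rw [← mul_pow, inv_mul_cancel₀ hq0, one_pow]
      have hnum : 1 - (-(w * q⁻¹)) * (q⁻¹) ^ n = (w * (q⁻¹) ^ (n+1)) * (1 + w⁻¹ * q ^ (n+1)) := by
        linear_combination (-(q⁻¹ ^ (n+1) * q ^ (n+1))) * hww - hqq
      have hden2 : 1 - (w * q⁻¹) * (q⁻¹) ^ n = (-(w * (q⁻¹) ^ (n+1))) * (1 - w⁻¹ * q ^ (n+1)) := by
        linear_combination (-(q⁻¹ ^ (n+1) * q ^ (n+1))) * hww - hqq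
      have hs : qPoch (-(w * q⁻¹)) q⁻¹ (n+1)
          = qPoch (-(w * q⁻¹)) q⁻¹ n * (1 - (-(w * q⁻¹)) * (q⁻¹) ^ n) := Finset.prod_range_succ _ _
      have hs2 : qPoch (w * q⁻¹) q⁻¹ (n+1)
          = qPoch (w * q⁻¹) q⁻¹ n * (1 - (w * q⁻¹) * (q⁻¹) ^ n) := Finset.prod_range_succ _ _
      rw [hs, hs2, mul_div_mul_comm, ih, hnum, hden2, mul_div_mul_comm,
        div_neg, div_self ht, c_succ]
      ring

theorem main {w q : ℂ} (hq : ‖q‖ < 1) (hq0 : q ≠ 0) (hw : 1 < ‖w‖)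
    (hw' : ∀ ℓ : ℕ, w ≠ q ^ (ℓ + 1)) :
    -((1 + w) / (2 * w ^ 2)) * ∑' n : ℕ, qPoch (-(w * q⁻¹)) q⁻¹ n / qPoch (w * q⁻¹) q⁻¹ n * (w ^ n)⁻¹
        - 1 / (2 * w)
      = ∑' n : ℕ, (-1) ^ (n + 1) * (w ^ (2 * n + 1))⁻¹ * q ^ (n ^ 2) := by
  have hw0 : w ≠ 0 := by
    intro h
    rw [h] at hw
    simp at hw
    linarith
  have ha : ‖w⁻¹‖ < 1 := by
    rw [norm_inv]
    exact inv_lt_one_of_one_lt₀ hw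
  have hden : ∀ j : ℕ, 1 - w⁻¹ * q ^ (j+1) ≠ 0 := by
    intro j h
    apply hw' j
    have h2 : w⁻¹ * q ^ (j+1) = 1 := by linear_combination -h
    calc w = w * (w⁻¹ * q ^ (j+1)) := by rw [h2]; ring
    _ = q ^ (j+1) := by field_simp
  -- rewrite LHS series
  have hL : ∀ n : ℕ, qPoch (-(w * q⁻¹)) q⁻¹ n / qPoch (w * q⁻¹) q⁻¹ n * (w ^ n)⁻¹
      = (-w⁻¹) ^ n * c w⁻¹ q n := by
    intro n
    rw [ratio_eq hw0 hq0 hden n, ← inv_pow, neg_pow w⁻¹]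
    ring
  rw [tsum_congr hL]
  -- rewrite RHS series
  have hR : ∀ n : ℕ, ((-1:ℂ)) ^ (n + 1) * (w ^ (2 * n + 1))⁻¹ * q ^ (n ^ 2)
      = (-w⁻¹) * ((-1:ℂ) ^ n * (w⁻¹) ^ (2*n) * q ^ (n ^ 2)) := by
    intro n
    rw [← inv_pow, pow_succ, pow_succ]
    ring
  rw [tsum_congr hR, tsum_mul_left]
  have hkey := phi_eq_theta (a := w⁻¹) (q := q) ha hq hden
  rw [Phi] at hkey
  set SS : ℂ := ∑' n : ℕ, (-w⁻¹) ^ n * c w⁻¹ q n with hSS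
  set TT : ℂ := theta w⁻¹ q with hTT
  rw [theta] at hTT
  rw [← hTT]
  -- hkey : (1 + w⁻¹) * SS = 2 * Θ - 1
  field_simp at hkey ⊢
  linear_combination (-1 : ℂ) * hkey

end G23


theorem g23_inverse (w q : ℂ) (hq : ‖q‖ < 1) (hq0 : q ≠ 0) (hw : 1 < ‖w‖)
    (hw' : ∀ ℓ : ℕ, w ≠ q ^ (ℓ + 1)) :
    -((1 + w) / (2 * w ^ 2)) * ∑' n : ℕ, qPoch (-(w * q⁻¹)) q⁻¹ n / qPoch (w * q⁻¹) q⁻¹ n * (w ^ n)⁻¹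
        - 1 / (2 * w)
      = ∑' n : ℕ, (-1) ^ (n + 1) * (w ^ (2 * n + 1))⁻¹ * q ^ (n ^ 2) := by
  exact G23.main hq hq0 hw hw'
end
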